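/- arXiv:2506.19274 — 3 statements merged into one kernel-verified Lean document; each statement's English description precedes it below -/
import Mathlib

section
/- Let X be a Banach space over ℝ or ℂ, let L : X →L[𝕜] X be a continuous linear operator, let P : X →L[𝕜] X be a continuous linear operator, and set Q = id − P. Then for every t ≥ 0, Dyson's identity holds: exp(t•L) = exp(t•(Q ∘ L)) + ∫_0^t exp((t−s)•L) ∘ P ∘ L ∘ exp(s•(Q ∘ L)) ds, where the integral is the Bochner integral of the (continuous) operator-valued integrand. -/
/-!
Duhamel's formula: `s ↦ exp((t - s)A) exp(sB)` has derivative `-exp((t - s)A) (A - B) exp(sB)`,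
so integrating over `[0, t]` gives `exp(tA) - exp(tB) = ∫₀ᵗ exp((t - s)A) (A - B) exp(sB) ds`.
Dyson's identity is the case `A = L`, `B = QL`, where `A - B = PL`.
-/

open NormedSpace

instance ContinuousLinearMap.toNormedAlgebraOfIsScalarTower {𝕜 𝕜' E : Type*}
    [NontriviallyNormedField 𝕜] [NormedField 𝕜'] [SMul 𝕜' 𝕜]
    [NormedAddCommGroup E] [NormedSpace 𝕜 E] [NormedSpace 𝕜' E] [IsScalarTower 𝕜' 𝕜 E]
    [SMulCommClass 𝕜 𝕜' E] : NormedAlgebra 𝕜' (E →L[𝕜] E) :=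
  { ContinuousLinearMap.algebra with norm_smul_le := norm_smul_le }

section Duhamel

variable {𝔸 : Type*} [NormedRing 𝔸] [NormedAlgebra ℝ 𝔸] [CompleteSpace 𝔸]

theorem hasDerivAt_exp_smul_mul_exp_smul (A B : 𝔸) (t s : ℝ) :
    HasDerivAt (fun s : ℝ => exp ((t - s) • A) * exp (s • B))
      (-(exp ((t - s) • A) * (A - B) * exp (s • B))) s := by
  have hA : HasDerivAt (fun s : ℝ => exp ((t - s) • A)) (-(exp ((t - s) • A) * A)) s := by
    simpa [Function.comp_def] using
      (hasDerivAt_exp_smul_const A (t - s)).scomp s ((hasDerivAt_id s).const_sub t)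
  refine (hA.mul (hasDerivAt_exp_smul_const' B s)).congr_deriv ?_
  noncomm_ring

theorem exp_smul_sub_exp_smul_eq_integral (A B : 𝔸) (t : ℝ) :
    exp (t • A) - exp (t • B) =
      ∫ s in (0 : ℝ)..t, exp ((t - s) • A) * (A - B) * exp (s • B) := by
  have hcont : Continuous fun s : ℝ => exp ((t - s) • A) * (A - B) * exp (s • B) :=
    (((differentiable_exp_smul_const ℝ A).continuous.comp (continuous_sub_left t)).mul
      continuous_const).mul (differentiable_exp_smul_const ℝ B).continuous
  have hftc := intervalIntegral.integral_eq_sub_of_hasDerivAt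
    (fun s _ => hasDerivAt_exp_smul_mul_exp_smul A B t s) (hcont.neg.intervalIntegrable 0 t)
  simp only [intervalIntegral.integral_neg, sub_self, sub_zero, zero_smul, exp_zero, one_mul,
    mul_one] at hftc
  rw [← neg_sub, ← hftc, neg_neg]

end Duhamel

theorem dyson_identity_general {𝕜 : Type*} [RCLike 𝕜] {X : Type*} [NormedAddCommGroup X]
    [NormedSpace 𝕜 X] [NormedSpace ℝ X] [IsScalarTower ℝ 𝕜 X] [SMulCommClass 𝕜 ℝ X]
    [CompleteSpace X]
    (L P : X →L[𝕜] X) (Q : X →L[𝕜] X)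
    (hQ : Q = ContinuousLinearMap.id 𝕜 X - P)
    (t : ℝ) :
    NormedSpace.exp (t • L) =
      NormedSpace.exp (t • (Q.comp L)) +
        ∫ s in (0:ℝ)..t,
          (NormedSpace.exp ((t - s) • L)).comp
            (P.comp (L.comp (NormedSpace.exp (s • (Q.comp L))))) := by
  have hPL : L - Q * L = P * L := by
    rw [hQ, ← ContinuousLinearMap.one_def]
    noncomm_ring
  have h := exp_smul_sub_exp_smul_eq_integral L (Q * L) t
  rw [hPL, sub_eq_iff_eq_add'] at h
  simp only [mul_assoc] at h
  exact h

/-- **Dyson's identity.** For continuous linear operators `L`, `P` on a Banach space `X`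
over `ℝ` or `ℂ`, with `Q = id - P`, and every `t ≥ 0`:
`exp(t•L) = exp(t•(Q∘L)) + ∫_0^t exp((t−s)•L) ∘ P ∘ L ∘ exp(s•(Q∘L)) ds`. -/
theorem dyson_identity {𝕜 : Type*} [RCLike 𝕜] {X : Type*} [NormedAddCommGroup X]
    [NormedSpace 𝕜 X] [NormedSpace ℝ X] [IsScalarTower ℝ 𝕜 X] [SMulCommClass 𝕜 ℝ X]
    [CompleteSpace X]
    (L P : X →L[𝕜] X) (Q : X →L[𝕜] X)
    (hQ : Q = ContinuousLinearMap.id 𝕜 X - P)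
    (t : ℝ) (ht : 0 ≤ t) :
    NormedSpace.exp (t • L) =
      NormedSpace.exp (t • (Q.comp L)) +
        ∫ s in (0:ℝ)..t,
          (NormedSpace.exp ((t - s) • L)).comp
            (P.comp (L.comp (NormedSpace.exp (s • (Q.comp L))))) :=
  dyson_identity_general L P Q hQ t
end

section
/- Let X be a Banach space over ℝ or ℂ, let L : X →L[𝕜] X and P : X →L[𝕜] X be continuous linear operators, set Q = id − P, and fix b ∈ X. Then for every t ≥ 0: P (L (exp(t•(Q∘L)) b)) = P (L (exp(t•L) b)) − ∫_0^t P (L (exp((t−s)•L) (P (L (exp(s•(Q∘L)) b))))) ds. -/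
/-!
Differentiating `s ↦ exp ((t - s) • A) * exp (s • B)` in a Banach algebra and integrating over
`[0, t]` gives Dyson's identity
`exp (t • B) = exp (t • A) + ∫₀ᵗ exp ((t - s) • A) * (B - A) * exp (s • B) ds`.
With `A = L` and `B = Q ∘ L` we have `B - A = -(P ∘ L)`; evaluating at `b` and applying the
bounded operator `P ∘ L`, which commutes with the integral, gives the Volterra equation.
-/

open NormedSpace

section Dyson

variable {𝔸 : Type*} [NormedRing 𝔸] [NormedAlgebra ℝ 𝔸] [CompleteSpace 𝔸]

theorem continuous_exp_smul (A : 𝔸) : Continuous fun s : ℝ => exp (s • A) :=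
  continuous_iff_continuousAt.2 fun s => (hasDerivAt_exp_smul_const A s).continuousAt

theorem hasDerivAt_exp_sub_smul_mul_exp_smul (A B : 𝔸) (t s : ℝ) :
    HasDerivAt (fun u : ℝ => exp ((t - u) • A) * exp (u • B))
      (exp ((t - s) • A) * (B - A) * exp (s • B)) s := by
  have hA : HasDerivAt (fun u : ℝ => exp ((t - u) • A)) (-(A * exp ((t - s) • A))) s := by
    simpa [Function.comp_def] using
      (hasDerivAt_exp_smul_const' A (t - s)).scomp s ((hasDerivAt_id s).const_sub t)
  have hcomm : A * exp ((t - s) • A) = exp ((t - s) • A) * A :=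
    ((Commute.refl A).smul_right (t - s)).exp_right.eq
  refine (hA.mul (hasDerivAt_exp_smul_const' B s)).congr_deriv ?_
  rw [hcomm]
  noncomm_ring

theorem continuous_exp_sub_smul_mul_mul_exp_smul (A B C : 𝔸) (t : ℝ) :
    Continuous fun s : ℝ => exp ((t - s) • A) * C * exp (s • B) :=
  (((continuous_exp_smul A).comp (continuous_sub_left t)).mul continuous_const).mul
    (continuous_exp_smul B)

theorem exp_smul_eq_exp_smul_add_integral (A B : 𝔸) (t : ℝ) :
    exp (t • B) = exp (t • A) + ∫ s in (0 : ℝ)..t, exp ((t - s) • A) * (B - A) * exp (s • B) := by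
  rw [intervalIntegral.integral_eq_sub_of_hasDerivAt
    (fun s _ => hasDerivAt_exp_sub_smul_mul_exp_smul A B t s)
    ((continuous_exp_sub_smul_mul_mul_exp_smul A B _ t).intervalIntegrable 0 t)]
  simp

end Dyson

-- Mathlib only provides `NormedAlgebra 𝕜 (X →L[𝕜] X)`; Dyson's identity needs it over `ℝ ⊆ 𝕜`.
noncomputable instance ContinuousLinearMap.toNormedAlgebraOfTower {𝕜 𝕜' X : Type*}
    [NontriviallyNormedField 𝕜] [NormedField 𝕜'] [NormedAlgebra 𝕜' 𝕜]
    [NormedAddCommGroup X] [NormedSpace 𝕜 X] [NormedSpace 𝕜' X]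
    [IsScalarTower 𝕜' 𝕜 X] [SMulCommClass 𝕜 𝕜' X] : NormedAlgebra 𝕜' (X →L[𝕜] X) where
  norm_smul_le := norm_smul_le

theorem projected_orthogonal_dynamics_volterra_general {𝕜 : Type*} [RCLike 𝕜] {X : Type*}
    [NormedAddCommGroup X] [NormedSpace 𝕜 X] [NormedSpace ℝ X]
    [IsScalarTower ℝ 𝕜 X] [SMulCommClass 𝕜 ℝ X] [CompleteSpace X]
    (L P : X →L[𝕜] X) (Q : X →L[𝕜] X)
    (hQ : Q = ContinuousLinearMap.id 𝕜 X - P)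
    (b : X) (t : ℝ) :
    P (L (NormedSpace.exp (t • (Q.comp L)) b)) =
      P (L (NormedSpace.exp (t • L) b)) -
        ∫ s in (0:ℝ)..t,
          P (L (NormedSpace.exp ((t - s) • L)
            (P (L (NormedSpace.exp (s • (Q.comp L)) b))))) := by
  have hQL : Q.comp L - L = -(P.comp L) := by
    rw [hQ, ContinuousLinearMap.sub_comp]; simp
  have hkernel := continuous_exp_sub_smul_mul_mul_exp_smul L (Q.comp L) (-(P.comp L)) t
  have hswap := (P.comp L).intervalIntegral_comp_comm
    ((hkernel.clm_apply (continuous_const (y := b))).intervalIntegrable (μ := MeasureTheory.volume) 0 t)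
  simp only [ContinuousLinearMap.comp_apply] at hswap
  rw [exp_smul_eq_exp_smul_add_integral L (Q.comp L) t, hQL, add_apply,
    ContinuousLinearMap.intervalIntegral_apply (hkernel.intervalIntegrable 0 t),
    map_add, map_add, ← hswap, sub_eq_add_neg, ← intervalIntegral.integral_neg]
  simp

/-- The projected action of the orthogonal-dynamics semigroup solves a Volterra integral
equation: for continuous linear operators `L`, `P` on a Banach space `X` over `ℝ` or `ℂ`,
with `Q = id - P` and `b ∈ X`, for every `t ≥ 0`:
`P (L (exp(t•(Q∘L)) b)) = P (L (exp(t•L) b))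
  − ∫_0^t P (L (exp((t−s)•L) (P (L (exp(s•(Q∘L)) b))))) ds`. -/
theorem projected_orthogonal_dynamics_volterra {𝕜 : Type*} [RCLike 𝕜] {X : Type*}
    [NormedAddCommGroup X] [NormedSpace 𝕜 X] [NormedSpace ℝ X]
    [IsScalarTower ℝ 𝕜 X] [SMulCommClass 𝕜 ℝ X] [CompleteSpace X]
    (L P : X →L[𝕜] X) (Q : X →L[𝕜] X)
    (hQ : Q = ContinuousLinearMap.id 𝕜 X - P)
    (b : X) (t : ℝ) (ht : 0 ≤ t) :
    P (L (NormedSpace.exp (t • (Q.comp L)) b)) =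
      P (L (NormedSpace.exp (t • L) b)) -
        ∫ s in (0:ℝ)..t,
          P (L (NormedSpace.exp ((t - s) • L)
            (P (L (NormedSpace.exp (s • (Q.comp L)) b))))) :=
  projected_orthogonal_dynamics_volterra_general L P Q hQ b t
end

section
/- Let H be a complete inner product space over ℝ, let (h_j)_{j ∈ Fin J} be a finite orthonormal family in H, let P : H →L[ℝ] H be the map P x = Σ_{j} ⟨h_j, x⟩ h_j (the orthogonal projection onto the span of the h_j), set Q = id − P, let L : H →L[ℝ] H be a continuous linear operator, and fix b ∈ H. Define, for t ≥ 0, the memory kernels K_j(t) = ⟨h_j, L (exp(t•(Q∘L)) b)⟩, and the data f_l(t) = ⟨h_l, exp(t•L) (L b)⟩ and g_{l j}(t) = ⟨h_l, exp(t•L) (L h_j)⟩. Then for every l ∈ Fin J and every t ≥ 0, the memory kernels satisfy the Volterra system K_l(t) = f_l(t) − Σ_{j ∈ Fin J} ∫_0^t g_{l j}(t−s) · K_j(s) ds. -/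
open scoped RealInnerProductSpace

/-!
Duhamel's formula `exp (t • B) = exp (t • A) - ∫₀ᵗ exp ((t - s) • A) * (A - B) * exp (s • B)`,
obtained by integrating the derivative of `s ↦ exp ((t - s) • A) * exp (s • B)`, is applied with
`A = L` and `B = Q ∘ L`, so that `A - B = P ∘ L`. Evaluating the continuous linear functional
`T ↦ ⟪h l, L (T b)⟫` and expanding `P` in the family `h` turns the integrand into
`∑ j, g l j (t - s) * K j s`, because `L` commutes with `exp (u • L)`.
-/

open NormedSpace

section Duhamel

variable {𝔸 : Type*} [NormedRing 𝔸] [NormedAlgebra ℝ 𝔸] [CompleteSpace 𝔸]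

@[fun_prop]
theorem Continuous.exp_smul_const {X : Type*} [TopologicalSpace X] {f : X → ℝ}
    (hf : Continuous f) (A : 𝔸) : Continuous fun x => exp (f x • A) :=
  (differentiable_exp_smul_const ℝ A).continuous.comp hf

theorem hasDerivAt_exp_smul_sub_mul_exp_smul (A B : 𝔸) (t s : ℝ) :
    HasDerivAt (fun u : ℝ => exp ((t - u) • A) * exp (u • B))
      (-(exp ((t - s) • A) * (A - B) * exp (s • B))) s := by
  have hA : HasDerivAt (fun u : ℝ => exp ((t - u) • A)) (-(exp ((t - s) • A) * A)) s := by
    simpa [Function.comp_def] using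
      (hasDerivAt_exp_smul_const A (t - s)).scomp s ((hasDerivAt_id s).const_sub t)
  refine (hA.mul (hasDerivAt_exp_smul_const' B s)).congr_deriv ?_
  noncomm_ring

theorem continuous_exp_smul_sub_mul_mul_exp_smul (A C B : 𝔸) (t : ℝ) :
    Continuous fun s : ℝ => exp ((t - s) • A) * C * exp (s • B) := by
  fun_prop

theorem exp_smul_eq_exp_smul_sub_integral (A B : 𝔸) (t : ℝ) :
    exp (t • B) = exp (t • A) - ∫ s in 0..t, exp ((t - s) • A) * (A - B) * exp (s • B) := by
  have := intervalIntegral.integral_eq_sub_of_hasDerivAt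
    (fun s _ => hasDerivAt_exp_smul_sub_mul_exp_smul A B t s)
    ((continuous_exp_smul_sub_mul_mul_exp_smul A (A - B) B t).neg.intervalIntegrable 0 t)
  simp only [intervalIntegral.integral_neg, sub_self, sub_zero, zero_smul, exp_zero, one_mul,
    mul_one] at this
  rw [sub_eq_add_neg, this]
  abel

end Duhamel

theorem ContinuousLinearMap.map_exp_smul_self_apply {E : Type*} [NormedAddCommGroup E]
    [NormedSpace ℝ E] (A : E →L[ℝ] E) (u : ℝ) (x : E) : A (exp (u • A) x) = exp (u • A) (A x) :=
  congrArg (· x) ((Commute.refl A).smul_right u).exp_right.eq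

theorem memory_kernel_volterra_general {H : Type*} [NormedAddCommGroup H]
    [InnerProductSpace ℝ H] [CompleteSpace H]
    {J : ℕ} (h : Fin J → H)
    (P : H →L[ℝ] H) (hP : ∀ x, P x = ∑ j, ⟪h j, x⟫ • h j)
    (Q : H →L[ℝ] H) (hQ : Q = ContinuousLinearMap.id ℝ H - P)
    (L : H →L[ℝ] H) (b : H)
    (K f : Fin J → ℝ → ℝ) (g : Fin J → Fin J → ℝ → ℝ)
    (hK : ∀ j t, K j t = ⟪h j, L (NormedSpace.exp (t • (Q.comp L)) b)⟫)
    (hf : ∀ l t, f l t = ⟪h l, NormedSpace.exp (t • L) (L b)⟫)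
    (hg : ∀ l j t, g l j t = ⟪h l, NormedSpace.exp (t • L) (L (h j))⟫) :
    ∀ l : Fin J, ∀ t : ℝ, 0 ≤ t →
      K l t = f l t - ∑ j, ∫ s in (0:ℝ)..t, g l j (t - s) * K j s := by
  intro l t _
  have hLQL : L - Q.comp L = P.comp L := by
    rw [hQ, ContinuousLinearMap.sub_comp, ContinuousLinearMap.id_comp, sub_sub_cancel]
  let Φ : (H →L[ℝ] H) →L[ℝ] ℝ :=
    (innerSL ℝ (h l)).comp (L.comp (ContinuousLinearMap.apply ℝ H b))
  have hΦ : ∀ T, Φ T = ⟪h l, L (T b)⟫ := fun _ => rfl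
  have hintegrand : ∀ s, Φ (exp ((t - s) • L) * (P.comp L) * exp (s • Q.comp L)) =
      ∑ j, g l j (t - s) * K j s := by
    intro s
    calc Φ (exp ((t - s) • L) * (P.comp L) * exp (s • Q.comp L))
        = ⟪h l, L (exp ((t - s) • L) (P (L (exp (s • Q.comp L) b))))⟫ := rfl
      _ = ⟪h l, L (exp ((t - s) • L) (∑ j, K j s • h j))⟫ := by simp only [hP, hK]
      _ = ∑ j, g l j (t - s) * K j s := by
        simp only [map_sum, map_smul, inner_sum, inner_smul_right, L.map_exp_smul_self_apply, hg,
          mul_comm]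
  have hsummand : ∀ j, Continuous fun s => g l j (t - s) * K j s := by
    intro j
    simp only [hg, hK]
    fun_prop
  calc K l t = Φ (exp (t • Q.comp L)) := hK l t
    _ = f l t - ∫ s in 0..t, ∑ j, g l j (t - s) * K j s := by
      rw [exp_smul_eq_exp_smul_sub_integral L, map_sub, hLQL, ← Φ.intervalIntegral_comp_comm
        ((continuous_exp_smul_sub_mul_mul_exp_smul _ _ _ t).intervalIntegrable 0 t), hΦ,
        L.map_exp_smul_self_apply, ← hf]
      simp only [hintegrand]
    _ = f l t - ∑ j, ∫ s in (0:ℝ)..t, g l j (t - s) * K j s := by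
      rw [intervalIntegral.integral_finsetSum fun j _ => (hsummand j).intervalIntegrable 0 t]

/-- **Volterra system for the Mori–Zwanzig memory kernels.** Let `(h j)` be a finite
orthonormal family in a real Hilbert space `H`, `P` the orthogonal projection onto their
span, `Q = id − P`, `L` a continuous linear operator and `b ∈ H`. With the memory kernels
`K j t = ⟪h j, L (exp(t•(Q∘L)) b)⟫`, and the data `f l t = ⟪h l, exp(t•L) (L b)⟫`,
`g l j t = ⟪h l, exp(t•L) (L (h j))⟫`, for every `l` and every `t ≥ 0`:
`K l t = f l t − Σ_j ∫_0^t g l j (t−s) * K j s ds`. -/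
theorem memory_kernel_volterra {H : Type*} [NormedAddCommGroup H]
    [InnerProductSpace ℝ H] [CompleteSpace H]
    {J : ℕ} (h : Fin J → H) (hh : Orthonormal ℝ h)
    (P : H →L[ℝ] H) (hP : ∀ x, P x = ∑ j, ⟪h j, x⟫ • h j)
    (Q : H →L[ℝ] H) (hQ : Q = ContinuousLinearMap.id ℝ H - P)
    (L : H →L[ℝ] H) (b : H)
    (K f : Fin J → ℝ → ℝ) (g : Fin J → Fin J → ℝ → ℝ)
    (hK : ∀ j t, K j t = ⟪h j, L (NormedSpace.exp (t • (Q.comp L)) b)⟫)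
    (hf : ∀ l t, f l t = ⟪h l, NormedSpace.exp (t • L) (L b)⟫)
    (hg : ∀ l j t, g l j t = ⟪h l, NormedSpace.exp (t • L) (L (h j))⟫) :
    ∀ l : Fin J, ∀ t : ℝ, 0 ≤ t →
      K l t = f l t - ∑ j, ∫ s in (0:ℝ)..t, g l j (t - s) * K j s :=
  memory_kernel_volterra_general h P hP Q hQ L b K f g hK hf hg
end
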